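/- Let α,β,γ ∈ [0,1/2]. Then for all signs ±,±' ∈ {+1,−1}, all τ,λ ∈ ℝ and all nonzero ξ,η ∈ ℝ^3, the angle θ(±ξ,±'η) between ±ξ and ±'η satisfies θ(±ξ,±'η) ≲ (⟨|τ+λ|−|ξ+η|⟩/min(⟨ξ⟩,⟨η⟩))^α + (⟨−τ±|ξ|⟩/min(⟨ξ⟩,⟨η⟩))^β + (⟨−λ±'|η|⟩/min(⟨ξ⟩,⟨η⟩))^γ. -/

import Mathlib

/- STATEMENT 15: angle estimate: for α,β,γ ∈ [0,1/2], signs ±,±′, τ,λ ∈ ℝ, nonzero ξ,η ∈ ℝ³: θ(±ξ,±′η) ≲ (⟨|τ+λ|-|ξ+η|⟩/min(⟨ξ⟩,⟨η⟩))^α + (⟨-τ±|ξ|⟩/min(⟨ξ⟩,⟨η⟩))^β + (⟨-λ±′|η|⟩/min(⟨ξ⟩,⟨η⟩))^γ. -/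

noncomputable section

open InnerProductGeometry

/-- ℝ³ as a Euclidean space. -/
abbrev E3 : Type := EuclideanSpace ℝ (Fin 3)

/-- The Japanese bracket ⟨ξ⟩ = (1+|ξ|²)^{1/2}. -/
def jb (ξ : E3) : ℝ := Real.sqrt (1 + ‖ξ‖ ^ 2)

/-- The Japanese bracket ⟨r⟩ = (1+r²)^{1/2} of a real number. -/
def jbR (r : ℝ) : ℝ := Real.sqrt (1 + r ^ 2)

/-! Put `σ = |±|ξ| ±' |η||`. Polarization gives `|ξ| |η| (1 - cos θ) = ±±' (σ² - |ξ + η|²) / 2`,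
and `|σ - |ξ + η||` is at most the sum of the three quantities in brackets, because
`±|ξ| ±' |η|` differs from `τ + λ` by the last two of them. Hence `(1 - cos θ) min(⟨ξ⟩, ⟨η⟩)` is
bounded by the sum of the brackets (trivially when `|ξ|` or `|η|` is below `1`), and
`θ² ≲ 1 - cos θ` turns this into `θ ≲ ∑ √rᵢ` for the three ratios `rᵢ`. Exponents in `[0, 1/2]`
dominate the square root where `rᵢ ≤ 1`, and where some `rᵢ ≥ 1` the bound `θ ≤ π` suffices. -/

open Real
open scoped RealInnerProductSpace

lemma one_le_jbR (r : ℝ) : 1 ≤ jbR r :=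
  one_le_sqrt.mpr (by nlinarith)

lemma abs_le_jbR (r : ℝ) : |r| ≤ jbR r :=
  abs_le_sqrt (by linarith)

lemma jbR_nonneg (r : ℝ) : 0 ≤ jbR r := sqrt_nonneg _

lemma min_one_sqrt_le_rpow {r e : ℝ} (hr : 0 ≤ r) (he : e ∈ Set.Icc (0 : ℝ) (1 / 2)) :
    min 1 (√r) ≤ r ^ e := by
  rcases le_total 1 r with h1 | h1
  · exact (min_le_left _ _).trans (one_le_rpow h1 he.1)
  rcases hr.eq_or_lt with rfl | hr0
  · simp [rpow_nonneg]
  rw [sqrt_eq_rpow]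
  exact (min_le_right _ _).trans (rpow_le_rpow_of_exponent_ge hr0 h1 he.2)

lemma sq_le_pi_sq_div_two_mul_one_sub_cos {x : ℝ} (h0 : 0 ≤ x) (hπ : x ≤ π) :
    x ^ 2 ≤ π ^ 2 / 2 * (1 - cos x) := by
  have h := cos_le_one_sub_mul_cos_sq (abs_le.mpr ⟨by linarith [pi_pos], hπ⟩)
  have : 2 / π ^ 2 * x ^ 2 * (π ^ 2 / 2) = x ^ 2 := by field_simp
  nlinarith [pi_pos]

section InnerProductSpace

variable {V : Type*} [NormedAddCommGroup V] [InnerProductSpace ℝ V]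

lemma norm_mul_norm_mul_one_sub_cos_angle_smul {s₁ s₂ : ℝ} (hs₁ : |s₁| = 1) (hs₂ : |s₂| = 1)
    (u v : V) :
    ‖u‖ * ‖v‖ * (1 - cos (angle (s₁ • u) (s₂ • v))) = ‖u‖ * ‖v‖ - s₁ * s₂ * ⟪u, v⟫ := by
  have h := cos_angle_mul_norm_mul_norm (s₁ • u) (s₂ • v)
  rw [norm_smul, norm_smul, norm_eq_abs, norm_eq_abs, hs₁, hs₂,
    real_inner_smul_left, real_inner_smul_right] at h
  linear_combination -h

lemma norm_mul_norm_sub_mul_inner_le {s₁ s₂ : ℝ} (hs₁ : |s₁| = 1) (hs₂ : |s₂| = 1) (u v : V) :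
    ‖u‖ * ‖v‖ - s₁ * s₂ * ⟪u, v⟫ ≤
      (‖u‖ + ‖v‖) * |(|s₁ * ‖u‖ + s₂ * ‖v‖| - ‖u + v‖)| := by
  set σ := |s₁ * ‖u‖ + s₂ * ‖v‖|
  have h₁ : s₁ ^ 2 = 1 := by rw [← sq_abs, hs₁, one_pow]
  have h₂ : s₂ ^ 2 = 1 := by rw [← sq_abs, hs₂, one_pow]
  have hσ : σ ≤ ‖u‖ + ‖v‖ := by
    refine (abs_add_le _ _).trans_eq ?_
    rw [abs_mul, abs_mul, hs₁, hs₂, abs_norm, abs_norm, one_mul, one_mul]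
  have hid : ‖u‖ * ‖v‖ - s₁ * s₂ * ⟪u, v⟫ = s₁ * s₂ * ((σ - ‖u + v‖) * (σ + ‖u + v‖)) / 2 := by
    have := norm_add_sq_real u v
    rw [show (σ - ‖u + v‖) * (σ + ‖u + v‖) = σ ^ 2 - ‖u + v‖ ^ 2 by ring, sq_abs]
    linear_combination s₁ * s₂ / 2 * this - s₁ * s₂ * ‖u‖ ^ 2 / 2 * h₁
      - s₁ * s₂ * ‖v‖ ^ 2 / 2 * h₂ - ‖u‖ * ‖v‖ * s₂ ^ 2 * h₁ - ‖u‖ * ‖v‖ * h₂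
  have hs : |s₁ * s₂| = 1 := by rw [abs_mul, hs₁, hs₂, one_mul]
  calc ‖u‖ * ‖v‖ - s₁ * s₂ * ⟪u, v⟫
      = s₁ * s₂ * ((σ - ‖u + v‖) * (σ + ‖u + v‖)) / 2 := hid
    _ ≤ |σ - ‖u + v‖| * (σ + ‖u + v‖) / 2 := by
        rw [← mul_assoc, ← one_mul |σ - ‖u + v‖|, ← hs, ← abs_mul]
        gcongr
        exact le_abs_self _
    _ ≤ |σ - ‖u + v‖| * (2 * (‖u‖ + ‖v‖)) / 2 := by
        gcongr
        linarith [norm_add_le u v]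
    _ = (‖u‖ + ‖v‖) * |σ - ‖u + v‖| := by ring

end InnerProductSpace

lemma abs_abs_add_sub_le (x y τ lam c : ℝ) :
    |(|x + y| - c)| ≤ |(|τ + lam| - c)| + |(-τ + x)| + |(-lam + y)| :=
  calc |(|x + y| - c)| ≤ |(|x + y| - |τ + lam|)| + |(|τ + lam| - c)| := abs_sub_le _ _ _
    _ ≤ |(x + y) - (τ + lam)| + |(|τ + lam| - c)| := add_le_add_left (abs_abs_sub_abs_le _ _) _
    _ = |(-τ + x) + (-lam + y)| + |(|τ + lam| - c)| := by ring_nf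
    _ ≤ _ := by linarith [abs_add_le (-τ + x) (-lam + y)]

lemma mul_le_four_mul_of_mul_mul_le {a b c m S : ℝ} (hc₀ : 0 ≤ c) (hc₂ : c ≤ 2) (hS : 1 ≤ S)
    (hma : m ≤ 1 + a) (hmb : m ≤ 1 + b) (h : a * b * c ≤ (a + b) * S) : c * m ≤ 4 * S := by
  by_cases hsmall : a < 1 ∨ b < 1
  · have hm : m ≤ 2 := by rcases hsmall with h' | h' <;> linarith
    nlinarith
  obtain ⟨ha, hb⟩ := not_or.mp hsmall
  simp only [not_lt] at ha hb
  rcases le_or_gt m 0 with hm | hm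
  · nlinarith
  have hab : m * (a + b) ≤ 4 * (a * b) := by nlinarith
  have : c * m * (a * b) ≤ 4 * S * (a * b) := by nlinarith
  exact le_of_mul_le_mul_right this (by positivity)

lemma one_sub_cos_angle_mul_min_jb_le {s₁ s₂ : ℝ} (hs₁ : |s₁| = 1) (hs₂ : |s₂| = 1)
    (τ lam : ℝ) (ξ η : E3) :
    (1 - cos (angle (s₁ • ξ) (s₂ • η))) * min (jb ξ) (jb η) ≤
      4 * (jbR (|τ + lam| - ‖ξ + η‖) + jbR (-τ + s₁ * ‖ξ‖) + jbR (-lam + s₂ * ‖η‖)) := by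
  refine mul_le_four_mul_of_mul_mul_le (a := ‖ξ‖) (b := ‖η‖)
    (by linarith [cos_le_one (angle (s₁ • ξ) (s₂ • η))])
    (by linarith [neg_one_le_cos (angle (s₁ • ξ) (s₂ • η))])
    (by linarith [one_le_jbR (|τ + lam| - ‖ξ + η‖), one_le_jbR (-τ + s₁ * ‖ξ‖),
      one_le_jbR (-lam + s₂ * ‖η‖)])
    ((min_le_left _ _).trans (sqrt_one_add_norm_sq_le ξ))
    ((min_le_right _ _).trans (sqrt_one_add_norm_sq_le η)) ?_
  calc ‖ξ‖ * ‖η‖ * (1 - cos (angle (s₁ • ξ) (s₂ • η)))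
      = ‖ξ‖ * ‖η‖ - s₁ * s₂ * ⟪ξ, η⟫ := norm_mul_norm_mul_one_sub_cos_angle_smul hs₁ hs₂ ξ η
    _ ≤ (‖ξ‖ + ‖η‖) * |(|s₁ * ‖ξ‖ + s₂ * ‖η‖| - ‖ξ + η‖)| :=
        norm_mul_norm_sub_mul_inner_le hs₁ hs₂ ξ η
    _ ≤ (‖ξ‖ + ‖η‖) * (|(|τ + lam| - ‖ξ + η‖)| + |(-τ + s₁ * ‖ξ‖)| + |(-lam + s₂ * ‖η‖)|) := by
        gcongr; exact abs_abs_add_sub_le _ _ _ _ _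
    _ ≤ _ := by gcongr <;> exact abs_le_jbR _

lemma le_mul_add_min_one_sqrt {θ K r₁ r₂ r₃ : ℝ} (hθ : 0 ≤ θ) (hK : θ ≤ K)
    (hr₁ : 0 ≤ r₁) (hr₂ : 0 ≤ r₂) (hr₃ : 0 ≤ r₃) (h : θ ^ 2 ≤ K ^ 2 * (r₁ + r₂ + r₃)) :
    θ ≤ K * (min 1 √r₁ + min 1 √r₂ + min 1 √r₃) := by
  set t := min 1 √r₁ + min 1 √r₂ + min 1 √r₃
  have h₀ : ∀ r, 0 ≤ min 1 √r := fun r => le_min zero_le_one (sqrt_nonneg r)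
  rcases le_or_gt 1 t with ht | ht
  · nlinarith [h₀ r₁, h₀ r₂, h₀ r₃]
  have hsq : ∀ r, 0 ≤ r → min 1 √r < 1 → min 1 √r ^ 2 = r := fun r hr hlt => by
    rw [min_eq_right (min_lt_iff.mp hlt |>.resolve_left (lt_irrefl 1)).le, sq_sqrt hr]
  have hsum : r₁ + r₂ + r₃ ≤ t ^ 2 := by
    rw [← hsq r₁ hr₁ (by linarith [h₀ r₂, h₀ r₃]), ← hsq r₂ hr₂ (by linarith [h₀ r₁, h₀ r₃]),
      ← hsq r₃ hr₃ (by linarith [h₀ r₁, h₀ r₂])]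
    nlinarith [h₀ r₁, h₀ r₂, h₀ r₃]
  refine le_of_abs_le (abs_le_of_sq_le_sq ?_ (by nlinarith [h₀ r₁, h₀ r₂, h₀ r₃]))
  calc θ ^ 2 ≤ K ^ 2 * (r₁ + r₂ + r₃) := h
    _ ≤ K ^ 2 * t ^ 2 := by gcongr
    _ = (K * t) ^ 2 := by ring

theorem angle_estimate (α β γ : ℝ)
    (hα : α ∈ Set.Icc (0 : ℝ) (1 / 2)) (hβ : β ∈ Set.Icc (0 : ℝ) (1 / 2))
    (hγ : γ ∈ Set.Icc (0 : ℝ) (1 / 2)) :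
    ∃ C : ℝ, 0 < C ∧ ∀ s₁ s₂ : ℝ, (s₁ = 1 ∨ s₁ = -1) → (s₂ = 1 ∨ s₂ = -1) →
      ∀ (τ lam : ℝ) (ξ η : E3), ξ ≠ 0 → η ≠ 0 →
        angle (s₁ • ξ) (s₂ • η) ≤
          C * ((jbR (|τ + lam| - ‖ξ + η‖) / min (jb ξ) (jb η)) ^ α +
            (jbR (-τ + s₁ * ‖ξ‖) / min (jb ξ) (jb η)) ^ β +
            (jbR (-lam + s₂ * ‖η‖) / min (jb ξ) (jb η)) ^ γ) := by
  refine ⟨π * √2, by positivity, fun s₁ s₂ hs₁ hs₂ τ lam ξ η _ _ => ?_⟩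
  set m := min (jb ξ) (jb η)
  set θ := angle (s₁ • ξ) (s₂ • η)
  set B₁ := jbR (|τ + lam| - ‖ξ + η‖)
  set B₂ := jbR (-τ + s₁ * ‖ξ‖)
  set B₃ := jbR (-lam + s₂ * ‖η‖)
  have hm : 0 < m :=
    lt_min (one_pos.trans_le (one_le_jbR ‖ξ‖)) (one_pos.trans_le (one_le_jbR ‖η‖))
  have hθπ : θ ≤ π * √2 :=
    (angle_le_pi _ _).trans (le_mul_of_one_le_right pi_pos.le one_lt_sqrt_two.le)
  have hcos : (1 - cos θ) * m ≤ 4 * (B₁ + B₂ + B₃) :=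
    one_sub_cos_angle_mul_min_jb_le ((abs_eq zero_le_one).mpr hs₁) ((abs_eq zero_le_one).mpr hs₂)
      τ lam ξ η
  have hθsq : θ ^ 2 ≤ (π * √2) ^ 2 * (B₁ / m + B₂ / m + B₃ / m) :=
    calc θ ^ 2 ≤ π ^ 2 / 2 * (1 - cos θ) :=
          sq_le_pi_sq_div_two_mul_one_sub_cos (angle_nonneg _ _) (angle_le_pi _ _)
      _ ≤ π ^ 2 / 2 * (4 * (B₁ + B₂ + B₃) / m) := by gcongr; rwa [le_div_iff₀ hm]
      _ = (π * √2) ^ 2 * (B₁ / m + B₂ / m + B₃ / m) := by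
          rw [mul_pow, sq_sqrt zero_le_two]; field_simp; ring
  have hB : ∀ r, 0 ≤ jbR r / m := fun r => div_nonneg (jbR_nonneg r) hm.le
  calc θ ≤ π * √2 * (min 1 √(B₁ / m) + min 1 √(B₂ / m) + min 1 √(B₃ / m)) :=
        le_mul_add_min_one_sqrt (angle_nonneg _ _) hθπ (hB _) (hB _) (hB _) hθsq
    _ ≤ _ := by
        gcongr
        · exact min_one_sqrt_le_rpow (hB _) hα
        · exact min_one_sqrt_le_rpow (hB _) hβ
        · exact min_one_sqrt_le_rpow (hB _) hγ
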